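/- Suppose (w, b) together with multipliers α satisfies the soft margin KKT conditions at cost C > 0. Then ‖w‖ ≤ n₊ * C * D, where n₊ = |I₊| and D is the two-class diameter. -/

import Mathlib

open scoped RealInnerProductSpace BigOperators

variable {E : Type*} [NormedAddCommGroup E] [InnerProductSpace ℝ E]

/-- The two-class diameter. -/
noncomputable def twoClassDiam {n : ℕ} (x : Fin n → E) (y : Fin n → ℝ) : ℝ :=
  sSup {d : ℝ | ∃ i j, y i = 1 ∧ y j = -1 ∧ d = ‖x i - x j‖}

open Classical in
/-- The index set of the positive class. -/
noncomputable def posSet {n : ℕ} (y : Fin n → ℝ) : Finset (Fin n) :=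
  Finset.univ.filter (fun i => y i = 1)

open Classical in
/-- The index set of the negative class. -/
noncomputable def negSet {n : ℕ} (y : Fin n → ℝ) : Finset (Fin n) :=
  Finset.univ.filter (fun i => y i = -1)

/-- The soft margin KKT conditions at cost `C` for `(w, b)` with multipliers `α`. -/
def SoftKKT {n : ℕ} (x : Fin n → E) (y : Fin n → ℝ) (C : ℝ) (w : E) (b : ℝ)
    (α : Fin n → ℝ) : Prop :=
  (∀ i, 0 ≤ α i ∧ α i ≤ C) ∧
  w = (∑ i ∈ posSet y, α i • x i) - (∑ i ∈ negSet y, α i • x i) ∧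
  (∑ i ∈ posSet y, α i) = (∑ i ∈ negSet y, α i) ∧
  (∀ i, α i < C → 1 ≤ y i * (⟪w, x i⟫ + b)) ∧
  (∀ i, y i * (⟪w, x i⟫ + b) < 1 → α i = C) ∧
  (∀ i, 0 < α i → y i * (⟪w, x i⟫ + b) ≤ 1)

/-!
With `S = ∑_{I₊} α = ∑_{I₋} α`, the balance condition lets us write
`S • w = ∑_{i ∈ I₊, j ∈ I₋} (α i * α j) • (x i - x j)`, so `S * ‖w‖ ≤ S ^ 2 * D`,
i.e. `‖w‖ ≤ S * D`, and `S ≤ n₊ * C` by the box constraints.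
-/

section BalancedCombination

variable {ι κ : Type*} (s : Finset ι) (t : Finset κ)

theorem Finset.sum_smul_sub_sum_smul_eq_sum_sum {R M : Type*} [CommRing R] [AddCommGroup M]
    [Module R M] {a : ι → R} {b : κ → R} (u : ι → M) (v : κ → M)
    (hab : ∑ i ∈ s, a i = ∑ j ∈ t, b j) :
    (∑ i ∈ s, a i) • (∑ i ∈ s, a i • u i - ∑ j ∈ t, b j • v j) =
      ∑ i ∈ s, ∑ j ∈ t, (a i * b j) • (u i - v j) := by
  simp only [smul_sub, Finset.sum_sub_distrib, Finset.smul_sum, smul_smul]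
  congr 1
  · rw [hab]
    refine Finset.sum_congr rfl fun i _ => ?_
    rw [← Finset.sum_smul, ← Finset.mul_sum, mul_comm]
  · rw [Finset.sum_comm]
    refine Finset.sum_congr rfl fun j _ => ?_
    rw [← Finset.sum_smul, ← Finset.sum_mul]

theorem Finset.norm_sum_smul_sub_sum_smul_le {F : Type*} [SeminormedAddCommGroup F]
    [NormedSpace ℝ F] {a : ι → ℝ} {b : κ → ℝ} {u : ι → F} {v : κ → F} {D : ℝ}
    (ha : ∀ i ∈ s, 0 ≤ a i) (hb : ∀ j ∈ t, 0 ≤ b j) (hab : ∑ i ∈ s, a i = ∑ j ∈ t, b j)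
    (huv : ∀ i ∈ s, ∀ j ∈ t, ‖u i - v j‖ ≤ D) :
    ‖∑ i ∈ s, a i • u i - ∑ j ∈ t, b j • v j‖ ≤ (∑ i ∈ s, a i) * D := by
  rcases (Finset.sum_nonneg ha).eq_or_lt with hS | hS
  · have ha0 := (Finset.sum_eq_zero_iff_of_nonneg ha).mp hS.symm
    have hb0 := (Finset.sum_eq_zero_iff_of_nonneg hb).mp (hab ▸ hS.symm)
    rw [← hS, Finset.sum_eq_zero fun i hi => by rw [ha0 i hi, zero_smul],
      Finset.sum_eq_zero fun j hj => by rw [hb0 j hj, zero_smul]]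
    simp
  · refine le_of_mul_le_mul_left ?_ hS
    calc (∑ i ∈ s, a i) * ‖∑ i ∈ s, a i • u i - ∑ j ∈ t, b j • v j‖
        = ‖∑ i ∈ s, ∑ j ∈ t, (a i * b j) • (u i - v j)‖ := by
          rw [← Finset.sum_smul_sub_sum_smul_eq_sum_sum s t u v hab, norm_smul,
            Real.norm_of_nonneg hS.le]
      _ ≤ ∑ i ∈ s, ∑ j ∈ t, a i * b j * D := by
          refine (norm_sum_le _ _).trans <| Finset.sum_le_sum fun i hi =>
            (norm_sum_le _ _).trans <| Finset.sum_le_sum fun j hj => ?_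
          rw [norm_smul, Real.norm_of_nonneg (mul_nonneg (ha i hi) (hb j hj))]
          exact mul_le_mul_of_nonneg_left (huv i hi j hj) (mul_nonneg (ha i hi) (hb j hj))
      _ = (∑ i ∈ s, a i) * ((∑ i ∈ s, a i) * D) := by
          simp only [← Finset.sum_mul, ← Finset.mul_sum]
          rw [← hab]
          ring

end BalancedCombination

section TwoClass

variable {n : ℕ}

theorem mem_posSet {y : Fin n → ℝ} {i : Fin n} : i ∈ posSet y ↔ y i = 1 := by
  simp [posSet]

theorem mem_negSet {y : Fin n → ℝ} {i : Fin n} : i ∈ negSet y ↔ y i = -1 := by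
  simp [negSet]

variable {F : Type*} [NormedAddCommGroup F] (x : Fin n → F) (y : Fin n → ℝ)

theorem norm_sub_le_twoClassDiam {i j : Fin n} (hi : y i = 1) (hj : y j = -1) :
    ‖x i - x j‖ ≤ twoClassDiam x y := by
  refine le_csSup ?_ ⟨i, j, hi, hj, rfl⟩
  refine (Set.finite_range fun p : Fin n × Fin n => ‖x p.1 - x p.2‖).subset ?_ |>.bddAbove
  rintro d ⟨i, j, -, -, rfl⟩
  exact ⟨(i, j), rfl⟩

-- Also when a class is empty, since `sSup ∅ = 0` in `ℝ`.
theorem twoClassDiam_nonneg : 0 ≤ twoClassDiam x y :=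
  Real.sSup_nonneg fun _ ⟨_, _, _, _, hd⟩ => hd ▸ norm_nonneg _

end TwoClass

theorem soft_margin_norm_bound_general {n : ℕ} (x : Fin n → E) (y : Fin n → ℝ)
    (C : ℝ) (w : E) (b : ℝ) (α : Fin n → ℝ)
    (hkkt : SoftKKT x y C w b α) :
    ‖w‖ ≤ ((posSet y).card : ℝ) * C * twoClassDiam x y := by
  obtain ⟨hbox, rfl, hbalance, -⟩ := hkkt
  have hw : ‖∑ i ∈ posSet y, α i • x i - ∑ j ∈ negSet y, α j • x j‖
      ≤ (∑ i ∈ posSet y, α i) * twoClassDiam x y :=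
    Finset.norm_sum_smul_sub_sum_smul_le _ _ (fun i _ => (hbox i).1) (fun j _ => (hbox j).1)
      hbalance fun i hi j hj =>
        norm_sub_le_twoClassDiam x y (mem_posSet.mp hi) (mem_negSet.mp hj)
  have hS : ∑ i ∈ posSet y, α i ≤ (posSet y).card * C := by
    simpa using Finset.sum_le_card_nsmul _ _ C fun i _ => (hbox i).2
  exact hw.trans (mul_le_mul_of_nonneg_right hS (twoClassDiam_nonneg x y))

theorem soft_margin_norm_bound {n : ℕ} (x : Fin n → E) (y : Fin n → ℝ)
    (hy : ∀ i, y i = 1 ∨ y i = -1)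
    (hpos : ∃ i, y i = 1) (hneg : ∃ i, y i = -1)
    (C : ℝ) (hC : 0 < C) (w : E) (b : ℝ) (α : Fin n → ℝ)
    (hkkt : SoftKKT x y C w b α) :
    ‖w‖ ≤ ((posSet y).card : ℝ) * C * twoClassDiam x y :=
  soft_margin_norm_bound_general x y C w b α hkkt
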